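/- Let Q : ℝ → ℂ^{m×m} have locally integrable entries, let U_Q be the Carathéodory solution of U_Q' = (0, Q; −Q*, 0) U_Q, U_Q(0) = I_{2m}, and set V_Q = σ₃ U_Q σ₃, where σ₃ = (I_m, 0; 0, −I_m). Then for every locally absolutely continuous F = (F₁, F₂)^⊤ : ℝ → ℂ^{2m}, one has M(Q)(U_Q F) = V_Q · i (F₁', −F₂')^⊤ almost everywhere on ℝ; equivalently V_Q^{−1} M(Q) U_Q F = i (F₁', −F₂')^⊤ a.e. -/

import Mathlib

/-!
With `A = (0, Q; -Q*, 0)` one has `M(Q) G = i σ₃ (G' - A G)` wherever `G` is differentiable.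
For `G = U_Q F` the product rule and `U_Q' = A U_Q` give `G' - A G = U_Q F'` almost everywhere,
and since `σ₃² = I` this is `i σ₃ U_Q F' = V_Q · i (F₁', -F₂')ᵀ`.
-/

open MeasureTheory

noncomputable section

/-- Index set for `ℂ^{2m}`, split into the two `m`-blocks. -/
abbrev Idx (m : ℕ) := Sum (Fin m) (Fin m)

/-- `ℂ^{2m}` with its Euclidean (Hilbert space) structure. -/
abbrev Vec (m : ℕ) := EuclideanSpace ℂ (Idx m)

/-- A function is locally absolutely continuous iff it is the indefinite integral of a
locally integrable function. -/
def LocAC {E : Type*} [NormedAddCommGroup E] [NormedSpace ℝ E] (F : ℝ → E) : Prop :=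
  ∃ g : ℝ → E, LocallyIntegrable g volume ∧ ∀ x : ℝ, F x = F 0 + ∫ t in (0:ℝ)..x, g t

/-- The Dirac-type differential expression `M(Q)F = i (F₁' - Q F₂, -Q* F₁ - F₂')ᵀ`. -/
def Mop {m : ℕ} (Q : ℝ → Fin m → Fin m → ℂ) (F : ℝ → Vec m) : ℝ → Vec m := fun x => WithLp.toLp 2 <|
  Sum.elim
    (fun i => Complex.I * (deriv (fun y => F y (Sum.inl i)) x - ∑ j, Q x i j * F x (Sum.inr j)))
    (fun i => Complex.I * (-(∑ j, (starRingEnd ℂ) (Q x j i) * F x (Sum.inl j))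
        - deriv (fun y => F y (Sum.inr i)) x))

/-- The formally self-adjoint differential expression `N(Q)F = i (F₁' - Q F₂, Q* F₁ + F₂')ᵀ`. -/
def Nop {m : ℕ} (Q : ℝ → Fin m → Fin m → ℂ) (F : ℝ → Vec m) : ℝ → Vec m := fun x => WithLp.toLp 2 <|
  Sum.elim
    (fun i => Complex.I * (deriv (fun y => F y (Sum.inl i)) x - ∑ j, Q x i j * F x (Sum.inr j)))
    (fun i => Complex.I * ((∑ j, (starRingEnd ℂ) (Q x j i) * F x (Sum.inl j))
        + deriv (fun y => F y (Sum.inr i)) x))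

/-- The coefficient matrix `A = (0, Q; -Q*, 0)` of the initial value problem `U' = A U`. -/
def Amat {m : ℕ} (Q : ℝ → Fin m → Fin m → ℂ) : ℝ → Idx m → Idx m → ℂ := fun x a b =>
  match a, b with
  | Sum.inl i, Sum.inr j => Q x i j
  | Sum.inr i, Sum.inl j => -(starRingEnd ℂ) (Q x j i)
  | _, _ => 0

/-- `U` is the Carathéodory solution of `U' = (0, Q; -Q*, 0) U`, `U(0) = I_{2m}`: it is
continuous and satisfies the corresponding integral equation. -/
def IsCarSol {m : ℕ} (Q : ℝ → Fin m → Fin m → ℂ) (U : ℝ → Idx m → Idx m → ℂ) : Prop :=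
  (∀ a b, Continuous fun x => U x a b) ∧
    ∀ (x : ℝ) (a b : Idx m),
      U x a b = (if a = b then 1 else 0) + ∫ t in (0:ℝ)..x, ∑ c, Amat Q t a c * U t c b

/-- Multiplication of a vector in `ℂ^{2m}` by a `2m × 2m` matrix. -/
def mulVec' {m : ℕ} (A : Idx m → Idx m → ℂ) (v : Vec m) : Vec m := WithLp.toLp 2 fun a => ∑ c, A a c * v c

/-- The derivative `F'` of a vector-valued function, taken entrywise. -/
def derivVec {m : ℕ} (F : ℝ → Vec m) : ℝ → Vec m := fun x => WithLp.toLp 2 fun a => deriv (fun y => F y a) x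

/-- The block sign `σ₃ = (I_m, 0; 0, -I_m)` as a sign function on indices. -/
def blockSign {m : ℕ} : Idx m → ℂ := Sum.elim (fun _ => 1) (fun _ => -1)

theorem MeasureTheory.LocallyIntegrable.conj {X 𝕜 : Type*} [MeasurableSpace X] [TopologicalSpace X]
    [RCLike 𝕜] {μ : Measure X} {f : X → 𝕜} (hf : LocallyIntegrable f μ) :
    LocallyIntegrable (fun x => (starRingEnd 𝕜) (f x)) μ := fun x => by
  obtain ⟨s, hs, hfs⟩ := hf x
  exact ⟨s, hs, (RCLike.conjCLE (K := 𝕜)).toContinuousLinearMap.integrable_comp hfs⟩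

theorem LocAC.ae_differentiableAt {E : Type*} [NormedAddCommGroup E] [NormedSpace ℝ E]
    [CompleteSpace E] {F : ℝ → E} (hF : LocAC F) : ∀ᵐ x, DifferentiableAt ℝ F x := by
  obtain ⟨g, hg, hFg⟩ := hF
  filter_upwards [LocallyIntegrable.ae_hasDerivAt_integral hg] with x hx
  rw [funext hFg]
  exact ((hx 0).const_add _).differentiableAt

theorem LocAC.ae_hasDerivAt_apply {m : ℕ} {F : ℝ → Vec m} (hF : LocAC F) :
    ∀ᵐ x, ∀ c, HasDerivAt (fun y => F y c) (deriv (fun y => F y c) x) x := by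
  filter_upwards [hF.ae_differentiableAt] with x hx c
  exact ((differentiableAt_piLp 2).1 hx c).hasDerivAt

theorem locallyIntegrable_Amat {m : ℕ} {Q : ℝ → Fin m → Fin m → ℂ}
    (hQ : ∀ i j, LocallyIntegrable (fun x => Q x i j) volume) (d e : Idx m) :
    LocallyIntegrable (fun t => Amat Q t d e) volume := by
  rcases d with i | i <;> rcases e with j | j
  · exact locallyIntegrable_const 0
  · exact hQ i j
  · exact (hQ j i).conj.neg
  · exact locallyIntegrable_const 0

theorem IsCarSol.ae_hasDerivAt {m : ℕ} {Q : ℝ → Fin m → Fin m → ℂ}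
    (hQ : ∀ i j, LocallyIntegrable (fun x => Q x i j) volume)
    {U : ℝ → Idx m → Idx m → ℂ} (hU : IsCarSol Q U) :
    ∀ᵐ x, ∀ d c, HasDerivAt (fun y => U y d c) (∑ e, Amat Q x d e * U x e c) x := by
  simp only [ae_all_iff]
  intro d c
  have hA : LocallyIntegrable (fun t => ∑ e, Amat Q t d e * U t e c) volume :=
    locallyIntegrable_finsetSum _ fun e _ =>
      (locallyIntegrable_Amat hQ d e).mul_continuous (hU.1 e c)
  filter_upwards [LocallyIntegrable.ae_hasDerivAt_integral hA] with x hx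
  rw [funext fun y => hU.2 y d c]
  exact (hx 0).const_add _

theorem mulVec'_apply {m : ℕ} (A : Idx m → Idx m → ℂ) (v : Vec m) (a : Idx m) :
    mulVec' A v a = ∑ c, A a c * v c := rfl

theorem hasDerivAt_mulVec'_apply {m : ℕ} {U : ℝ → Idx m → Idx m → ℂ} {F : ℝ → Vec m}
    {U' : Idx m → Idx m → ℂ} {F' : Idx m → ℂ} {x : ℝ}
    (hU : ∀ d c, HasDerivAt (fun y => U y d c) (U' d c) x)
    (hF : ∀ c, HasDerivAt (fun y => F y c) (F' c) x) (d : Idx m) :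
    HasDerivAt (fun y => mulVec' (U y) (F y) d) (∑ c, (U' d c * F x c + U x d c * F' c)) x := by
  simp only [mulVec'_apply]
  exact HasDerivAt.fun_sum fun c _ => (hU d c).mul (hF c)

theorem Mop_apply_of_hasDerivAt {m : ℕ} (Q : ℝ → Fin m → Fin m → ℂ) {G : ℝ → Vec m}
    {G' : Idx m → ℂ} {x : ℝ} (hG : ∀ d, HasDerivAt (fun y => G y d) (G' d) x) (a : Idx m) :
    Mop Q G x a = Complex.I * blockSign a * (G' a - ∑ e, Amat Q x a e * G x e) := by
  rcases a with i | i <;>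
  · simp only [Mop, Amat, blockSign, (hG _).deriv, Sum.elim_inl, Sum.elim_inr,
      Fintype.sum_sum_type, zero_mul, neg_mul, Finset.sum_neg_distrib, Finset.sum_const_zero,
      zero_add, add_zero]
    ring

/-- with `V_Q = σ₃ U_Q σ₃`, one has
`M(Q)(U_Q F) = V_Q · i (F₁', -F₂')ᵀ` a.e. on `ℝ` for every locally absolutely continuous `F`. -/
theorem Mop_UQ_eq_VQ (m : ℕ) (Q : ℝ → Fin m → Fin m → ℂ)
    (hQ : ∀ i j, LocallyIntegrable (fun x => Q x i j) volume)
    (U : ℝ → Idx m → Idx m → ℂ) (hU : IsCarSol Q U)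
    (F : ℝ → Vec m) (hF : LocAC F) :
    ∀ᵐ x ∂(volume : Measure ℝ), ∀ a : Idx m,
      Mop Q (fun y => mulVec' (U y) (F y)) x a =
        ∑ c, (blockSign a * U x a c * blockSign c) *
          (Complex.I * (Sum.elim (fun i => deriv (fun y => F y (Sum.inl i)) x)
            (fun i => -deriv (fun y => F y (Sum.inr i)) x) c)) := by
  filter_upwards [hF.ae_hasDerivAt_apply, hU.ae_hasDerivAt hQ] with x hFx hUx a
  rw [Mop_apply_of_hasDerivAt Q (hasDerivAt_mulVec'_apply hUx hFx)]
  have hAU : ∑ c, (∑ e, Amat Q x a e * U x e c) * F x c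
      = ∑ e, Amat Q x a e * mulVec' (U x) (F x) e := by
    simp only [mulVec'_apply, Finset.mul_sum, Finset.sum_mul, mul_assoc]
    exact Finset.sum_comm
  rw [Finset.sum_add_distrib, hAU, add_sub_cancel_left, Finset.mul_sum]
  refine Finset.sum_congr rfl fun c _ => ?_
  rcases c with j | j <;> simp only [blockSign, Sum.elim_inl, Sum.elim_inr] <;> ring
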